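/- Let B₁, B₂ be bialgebras, φ : B₂ → B₁ a bialgebra morphism, A_i a B_i-module algebra (i=1,2), and h : A₁ → A₂ an algebra morphism satisfying b·h(a) = h(φ(b)·a) for all b ∈ B₂, a ∈ A₁. Suppose F_i ∈ B_i⊗B_i are twisting elements and G ∈ B₁ satisfies Δ(G)F₁ = (φ⊗φ)(F₂)(G⊗G). Then the map h̃ : A₁ → A₂ defined by h̃(a) := h(G·a) is a morphism of the twisted algebras (A₁, *₁) → (A₂, *₂), where a *_i b := μ_{A_i}(F_i(a⊗b)). -/

import Mathlib

/-! By the module-algebra axiom, `G · (a *₁ b) = μ(Δ(G)F₁ · (a ⊗ b))`. The hypothesis on `G`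
rewrites `Δ(G)F₁` as `(φ⊗φ)(F₂)(G⊗G)`, so this is `μ((φ⊗φ)(F₂) · (G·a ⊗ G·b))`. Since `h` is
multiplicative and its equivariance along `φ` extends to `B₂ ⊗ B₂` acting diagonally, applying
`h` turns this into `μ(F₂ · (h(G·a) ⊗ h(G·b))) = h̃ a *₂ h̃ b`. -/

open TensorProduct Coalgebra

section Prelude

variable (R : Type*) [CommRing R]
variable (B : Type*) [Ring B] [Bialgebra R B]
variable (A : Type*) [Ring A] [Algebra R A]

/-- The action of `B ⊗ B` on `A ⊗ A` induced by a representation `ρ : B → End A`. -/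
noncomputable def act2 (ρ : B →ₐ[R] Module.End R A) :
    B ⊗[R] B →ₗ[R] (A ⊗[R] A) →ₗ[R] A ⊗[R] A :=
  TensorProduct.homTensorHomMap (RingHom.id R) A A A A ∘ₗ TensorProduct.map ρ.toLinearMap ρ.toLinearMap

/-- `A` is a left `B`-module algebra via `ρ`: the multiplication of `A` is `B`-linear
(with respect to the diagonal action on `A ⊗ A`), and `b • 1 = ε(b) • 1`. -/
def IsModuleAlgebra (ρ : B →ₐ[R] Module.End R A) : Prop :=
  (∀ b : B, (ρ b) ∘ₗ LinearMap.mul' R A =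
      LinearMap.mul' R A ∘ₗ act2 R B A ρ (Coalgebra.comul b)) ∧
  (∀ b : B, ρ b 1 = Coalgebra.counit (R := R) b • (1 : A))

/-- `F ∈ B ⊗ B` is a twisting element: `[(Δ⊗id)F](F⊗1) = [(id⊗Δ)F](1⊗F)` and
`(ε⊗id)F = 1 = (id⊗ε)F`. -/
def IsTwisting (F : B ⊗[R] B) : Prop :=
  (TensorProduct.map Coalgebra.comul LinearMap.id F) * (F ⊗ₜ[R] (1 : B)) =
    (TensorProduct.assoc R B B B).symm
      ((TensorProduct.map LinearMap.id Coalgebra.comul F) * ((1 : B) ⊗ₜ[R] F)) ∧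
  TensorProduct.lid R B (TensorProduct.map Coalgebra.counit LinearMap.id F) = 1 ∧
  TensorProduct.rid R B (TensorProduct.map LinearMap.id Coalgebra.counit F) = 1

/-- The multiplication twisted by `F`: `a * b := μ_A (F (a ⊗ b))`. -/
noncomputable def twMul (ρ : B →ₐ[R] Module.End R A) (F : B ⊗[R] B) (a b : A) : A :=
  LinearMap.mul' R A (act2 R B A ρ F (a ⊗ₜ[R] b))

end Prelude

section Act2

variable {R : Type*} [CommRing R] {B : Type*} [Ring B] [Bialgebra R B]
  {A : Type*} [Ring A] [Algebra R A]

@[simp]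
lemma act2_tmul (ρ : B →ₐ[R] Module.End R A) (b₁ b₂ : B) :
    act2 R B A ρ (b₁ ⊗ₜ[R] b₂) = TensorProduct.map (ρ b₁) (ρ b₂) := by
  simp [act2]

lemma act2_mul (ρ : B →ₐ[R] Module.End R A) (x y : B ⊗[R] B) :
    act2 R B A ρ (x * y) = act2 R B A ρ x ∘ₗ act2 R B A ρ y := by
  induction x using TensorProduct.induction_on with
  | zero => simp
  | add x₁ x₂ h₁ h₂ => simp [add_mul, h₁, h₂, LinearMap.add_comp]
  | tmul b₁ b₂ =>
    induction y using TensorProduct.induction_on with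
    | zero => simp
    | add y₁ y₂ h₁ h₂ => simp [mul_add, h₁, h₂, LinearMap.comp_add]
    | tmul c₁ c₂ =>
      simp only [Algebra.TensorProduct.tmul_mul_tmul, act2_tmul, map_mul]
      exact TensorProduct.map_comp _ _ _ _

lemma IsModuleAlgebra.act_twMul {ρ : B →ₐ[R] Module.End R A} (hρ : IsModuleAlgebra R B A ρ)
    (b : B) (F : B ⊗[R] B) (a c : A) :
    ρ b (twMul R B A ρ F a c) =
      LinearMap.mul' R A (act2 R B A ρ (comul b * F) (a ⊗ₜ[R] c)) := by
  rw [act2_mul, LinearMap.comp_apply, ← LinearMap.comp_apply (LinearMap.mul' R A), ← hρ.1 b]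
  rfl

lemma act2_comp_map_map {B₁ B₂ : Type*} [Ring B₁] [Ring B₂] [Bialgebra R B₁] [Bialgebra R B₂]
    {A₁ A₂ : Type*} [Ring A₁] [Ring A₂] [Algebra R A₁] [Algebra R A₂]
    {ρ₁ : B₁ →ₐ[R] Module.End R A₁} {ρ₂ : B₂ →ₐ[R] Module.End R A₂}
    {φ : B₂ →ₗ[R] B₁} {f : A₁ →ₗ[R] A₂} (hf : ∀ b, ρ₂ b ∘ₗ f = f ∘ₗ ρ₁ (φ b))
    (F : B₂ ⊗[R] B₂) :
    act2 R B₂ A₂ ρ₂ F ∘ₗ TensorProduct.map f f =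
      TensorProduct.map f f ∘ₗ act2 R B₁ A₁ ρ₁ (TensorProduct.map φ φ F) := by
  induction F using TensorProduct.induction_on with
  | zero => simp
  | add x y hx hy => simp only [map_add, LinearMap.add_comp, LinearMap.comp_add, hx, hy]
  | tmul b₁ b₂ => simp only [TensorProduct.map_tmul, act2_tmul, ← TensorProduct.map_comp, hf]

end Act2

theorem twisted_morphism_general
    (k : Type*) [Field k]
    (B₁ B₂ : Type*) [Ring B₁] [Ring B₂] [Bialgebra k B₁] [Bialgebra k B₂]
    (A₁ A₂ : Type*) [Ring A₁] [Ring A₂] [Algebra k A₁] [Algebra k A₂]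
    (φ : B₂ →ₐc[k] B₁)
    (ρ₁ : B₁ →ₐ[k] Module.End k A₁) (hρ₁ : IsModuleAlgebra k B₁ A₁ ρ₁)
    (ρ₂ : B₂ →ₐ[k] Module.End k A₂)
    (h : A₁ →ₐ[k] A₂)
    (hequiv : ∀ (b : B₂) (a : A₁), ρ₂ b (h a) = h (ρ₁ (φ b) a))
    (F₁ : B₁ ⊗[k] B₁)
    (F₂ : B₂ ⊗[k] B₂)
    (G : B₁)
    (hG : Coalgebra.comul (R := k) G * F₁ =
      (TensorProduct.map φ.toLinearMap φ.toLinearMap F₂) * (G ⊗ₜ[k] G)) :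
    ∀ a b : A₁,
      h (ρ₁ G (twMul k B₁ A₁ ρ₁ F₁ a b)) =
        twMul k B₂ A₂ ρ₂ F₂ (h (ρ₁ G a)) (h (ρ₁ G b)) := by
  intro a b
  have h_equivariant : ∀ b, ρ₂ b ∘ₗ h.toLinearMap = h.toLinearMap ∘ₗ ρ₁ (φ b) :=
    fun b => LinearMap.ext (hequiv b)
  calc h (ρ₁ G (twMul k B₁ A₁ ρ₁ F₁ a b))
      = h (LinearMap.mul' k A₁ (act2 k B₁ A₁ ρ₁ (TensorProduct.map φ.toLinearMap φ.toLinearMap F₂)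
          (ρ₁ G a ⊗ₜ[k] ρ₁ G b))) := by
        rw [hρ₁.act_twMul, hG, act2_mul, LinearMap.comp_apply, act2_tmul, TensorProduct.map_tmul]
    _ = LinearMap.mul' k A₂ (act2 k B₂ A₂ ρ₂ F₂ (h (ρ₁ G a) ⊗ₜ[k] h (ρ₁ G b))) := by
        have h_act := LinearMap.congr_fun (act2_comp_map_map h_equivariant F₂)
          (ρ₁ G a ⊗ₜ[k] ρ₁ G b)
        simp only [LinearMap.comp_apply, TensorProduct.map_tmul, AlgHom.toLinearMap_apply] at h_act
        rw [h_act, ← LinearMap.comp_apply (LinearMap.mul' k A₂), ← AlgHom.comp_mul']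
        rfl

/-- Given a bialgebra morphism `φ : B₂ → B₁`, module algebras `A i`
over `B i`, an equivariant algebra morphism `h : A₁ → A₂`, twisting elements `F i` and
`G ∈ B₁` with `Δ(G)F₁ = (φ⊗φ)(F₂)(G⊗G)`, the map `h̃(a) := h(G·a)` is a morphism of
the twisted algebras. -/
theorem twisted_morphism
    (k : Type*) [Field k] [CharZero k]
    (B₁ B₂ : Type*) [Ring B₁] [Ring B₂] [Bialgebra k B₁] [Bialgebra k B₂]
    (A₁ A₂ : Type*) [Ring A₁] [Ring A₂] [Algebra k A₁] [Algebra k A₂]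
    (φ : B₂ →ₐc[k] B₁)
    (ρ₁ : B₁ →ₐ[k] Module.End k A₁) (hρ₁ : IsModuleAlgebra k B₁ A₁ ρ₁)
    (ρ₂ : B₂ →ₐ[k] Module.End k A₂) (hρ₂ : IsModuleAlgebra k B₂ A₂ ρ₂)
    (h : A₁ →ₐ[k] A₂)
    (hequiv : ∀ (b : B₂) (a : A₁), ρ₂ b (h a) = h (ρ₁ (φ b) a))
    (F₁ : B₁ ⊗[k] B₁) (hF₁ : IsTwisting k B₁ F₁)
    (F₂ : B₂ ⊗[k] B₂) (hF₂ : IsTwisting k B₂ F₂)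
    (G : B₁)
    (hG : Coalgebra.comul (R := k) G * F₁ =
      (TensorProduct.map φ.toLinearMap φ.toLinearMap F₂) * (G ⊗ₜ[k] G)) :
    ∀ a b : A₁,
      h (ρ₁ G (twMul k B₁ A₁ ρ₁ F₁ a b)) =
        twMul k B₂ A₂ ρ₂ F₂ (h (ρ₁ G a)) (h (ρ₁ G b)) :=
  twisted_morphism_general k B₁ B₂ A₁ A₂ φ ρ₁ hρ₁ ρ₂ h hequiv F₁ F₂ G hG
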